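/- Let A be an abelian group and s ∈ A an element with 2s = 0. Then in the group 𝒴(A, s), the antisymmetry relation holds: for all a₁, a₂, a₃ ∈ A, the class of Y[a₂, a₁, a₃] equals the negative of the class of Y[a₁, a₂, a₃]. -/
import Mathlib


/-- The subgroup of relators defining the group `𝒴(A, s)`: cyclic invariance,
multilinearity in the first entry, and the slide relation. -/
def YRel (A : Type*) [AddCommGroup A] (s : A) : AddSubgroup (FreeAbelianGroup (A × A × A)) :=
  AddSubgroup.closure
    {x | (∃ a₁ a₂ a₃ : A, x = FreeAbelianGroup.of (a₁, a₂, a₃) - FreeAbelianGroup.of (a₂, a₃, a₁))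
      ∨ (∃ a₁ a₁' a₂ a₃ : A, x = FreeAbelianGroup.of (a₁ + a₁', a₂, a₃)
          - FreeAbelianGroup.of (a₁, a₂, a₃) - FreeAbelianGroup.of (a₁', a₂, a₃))
      ∨ (∃ a₁ a₂ : A, x = FreeAbelianGroup.of (a₁, a₁, a₂) - FreeAbelianGroup.of (s, a₁, a₂))}

/-- The group `𝒴(A, s)`: the quotient of the free abelian group on `A × A × A` by the
cyclic invariance, multilinearity and slide relations. -/
abbrev YGroup (A : Type*) [AddCommGroup A] (s : A) : Type _ :=
  FreeAbelianGroup (A × A × A) ⧸ YRel A s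

/-- The class `Y[a₁, a₂, a₃]` in `𝒴(A, s)`. -/
def Ysym {A : Type*} [AddCommGroup A] (s : A) (a₁ a₂ a₃ : A) : YGroup A s :=
  QuotientAddGroup.mk (FreeAbelianGroup.of (a₁, a₂, a₃))


section
variable {A : Type*} [AddCommGroup A] (s : A)

lemma Ycyc (a₁ a₂ a₃ : A) : Ysym s a₁ a₂ a₃ = Ysym s a₂ a₃ a₁ := by
  rw [Ysym, Ysym, QuotientAddGroup.eq_iff_sub_mem]
  exact AddSubgroup.subset_closure (Or.inl ⟨a₁, a₂, a₃, rfl⟩)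

lemma Yadd1 (a₁ a₁' a₂ a₃ : A) :
    Ysym s (a₁ + a₁') a₂ a₃ = Ysym s a₁ a₂ a₃ + Ysym s a₁' a₂ a₃ := by
  rw [Ysym, Ysym, Ysym, ← QuotientAddGroup.mk_add, QuotientAddGroup.eq_iff_sub_mem, sub_add_eq_sub_sub]
  exact AddSubgroup.subset_closure (Or.inr (Or.inl ⟨a₁, a₁', a₂, a₃, rfl⟩))

lemma Yslide (a₁ a₂ : A) : Ysym s a₁ a₁ a₂ = Ysym s s a₁ a₂ := by
  rw [Ysym, Ysym, QuotientAddGroup.eq_iff_sub_mem]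
  exact AddSubgroup.subset_closure (Or.inr (Or.inr ⟨a₁, a₂, rfl⟩))

lemma Yadd2 (a₁ a₂ a₂' a₃ : A) :
    Ysym s a₁ (a₂ + a₂') a₃ = Ysym s a₁ a₂ a₃ + Ysym s a₁ a₂' a₃ := by
  calc Ysym s a₁ (a₂ + a₂') a₃ = Ysym s a₃ a₁ (a₂ + a₂') := (Ycyc s a₃ a₁ (a₂ + a₂')).symm
    _ = Ysym s (a₂ + a₂') a₃ a₁ := (Ycyc s (a₂ + a₂') a₃ a₁).symm
    _ = Ysym s a₂ a₃ a₁ + Ysym s a₂' a₃ a₁ := Yadd1 s a₂ a₂' a₃ a₁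
    _ = Ysym s a₁ a₂ a₃ + Ysym s a₁ a₂' a₃ := by
        rw [Ycyc s a₂ a₃ a₁, Ycyc s a₂' a₃ a₁, Ycyc s a₃ a₁ a₂, Ycyc s a₃ a₁ a₂']
end
/-- Let `A` be an abelian group and `s ∈ A` with `2s = 0`. Then in `𝒴(A, s)`
the antisymmetry relation holds: the class of `Y[a₂, a₁, a₃]` is the negative of the class of
`Y[a₁, a₂, a₃]`. -/
theorem stmt16 (A : Type*) [AddCommGroup A] (s : A) (hs : 2 • s = 0) (a₁ a₂ a₃ : A) :
    Ysym s a₂ a₁ a₃ = - Ysym s a₁ a₂ a₃ := by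
  have h0 : Ysym s s (a₁ + a₂) a₃
      = Ysym s a₁ a₁ a₃ + Ysym s a₁ a₂ a₃ + (Ysym s a₂ a₁ a₃ + Ysym s a₂ a₂ a₃) := by
    rw [← Yslide, Yadd1, Yadd2, Yadd2]
  have h1 : Ysym s s (a₁ + a₂) a₃ = Ysym s a₁ a₁ a₃ + Ysym s a₂ a₂ a₃ := by
    rw [Yadd2, ← Yslide, ← Yslide]
  have h2 : Ysym s a₁ a₂ a₃ + Ysym s a₂ a₁ a₃
      = (Ysym s a₁ a₁ a₃ + Ysym s a₁ a₂ a₃ + (Ysym s a₂ a₁ a₃ + Ysym s a₂ a₂ a₃))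
        - (Ysym s a₁ a₁ a₃ + Ysym s a₂ a₂ a₃) := by abel
  rw [← h0, h1, sub_self] at h2
  exact eq_neg_of_add_eq_zero_right h2
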